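/- The variance of the weighted sum is maximized by the comonotonic coupling: Var(Σ_i w_i X_i) ≤ Var(Σ_i w_i F_{X_i}^{-1}(U)) for any random vector (X_1,...,X_d) with given marginals F_{X_i}, nonnegative weights w_i, and U uniform on (0,1). -/

import Mathlib

open MeasureTheory ProbabilityTheory Real Filter

noncomputable def cov' {Ω : Type*} [MeasurableSpace Ω] (μ : Measure Ω) (X Y : Ω → ℝ) : ℝ :=
  (∫ ω, X ω * Y ω ∂μ) - (∫ ω, X ω ∂μ) * (∫ ω, Y ω ∂μ)

noncomputable def var' {Ω : Type*} [MeasurableSpace Ω] (μ : Measure Ω) (X : Ω → ℝ) : ℝ :=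
  cov' μ X X

noncomputable def corr' {Ω : Type*} [MeasurableSpace Ω] (μ : Measure Ω) (X Y : Ω → ℝ) : ℝ :=
  cov' μ X Y / (Real.sqrt (var' μ X) * Real.sqrt (var' μ Y))

noncomputable def quantile (ν : Measure ℝ) (p : ℝ) : ℝ := sInf {x | p ≤ cdf ν x}

noncomputable def comono {Ω : Type*} [MeasurableSpace Ω] (μ : Measure Ω) (U : Ω → ℝ) (X : Ω → ℝ) :
    Ω → ℝ :=
  fun ω => quantile (Measure.map X μ) (U ω)

noncomputable def RHIX {Ω : Type*} [MeasurableSpace Ω] (μ : Measure Ω) (U : Ω → ℝ) {d : ℕ}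
    (w : Fin d → ℝ) (X : Fin d → Ω → ℝ) : ℝ :=
  (∑ p ∈ Finset.univ.offDiag, w p.1 * w p.2 * cov' μ (X p.1) (X p.2)) /
  (∑ p ∈ Finset.univ.offDiag, w p.1 * w p.2 * cov' μ (comono μ U (X p.1)) (comono μ U (X p.2)))

/-! Hoeffding's identity writes `E[XY]` as `∬ E[(1{s<X} - 1{s<0}) (1{t<Y} - 1{t<0})] ds dt`.
With the marginals fixed, the integrand increases with the joint survival probability
`P(X > s, Y > t)`, which never exceeds the Fréchet bound `min (P(X > s)) (P(Y > t))`.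
The quantile coupling `(F⁻¹(U), G⁻¹(U))` has the same marginals and attains this bound: on `(0,1)`
the events `{s < F⁻¹(p)} = {F(s) < p}` are nested. So every covariance, and hence (the weights being
nonnegative) the variance of the weighted sum, is largest under the comonotone coupling. -/

open Set

section Quantile

variable (ν : Measure ℝ)

theorem quantile_le_iff {p : ℝ} (hp : p ∈ Ioo 0 1) (x : ℝ) :
    quantile ν p ≤ x ↔ p ≤ cdf ν x := by
  have hne : {y | p ≤ cdf ν y}.Nonempty :=
    ((tendsto_cdf_atTop ν).eventually (eventually_ge_nhds hp.2)).exists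
  have hbdd : BddBelow {y | p ≤ cdf ν y} := by
    obtain ⟨y₀, hy₀⟩ := ((tendsto_cdf_atBot ν).eventually (eventually_lt_nhds hp.1)).exists
    exact ⟨y₀, fun y hy => le_of_not_gt fun hlt => (hy.trans (monotone_cdf ν hlt.le)).not_gt hy₀⟩
  refine ⟨fun h => le_trans ?_ (monotone_cdf ν h), fun h => csInf_le hbdd h⟩
  -- `cdf ν ≥ p` on `Ioi (quantile ν p)`, and `cdf ν` is right-continuous
  refine ge_of_tendsto
    (((cdf ν).right_continuous _).mono_left (nhdsWithin_mono _ Ioi_subset_Ici_self))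
    (eventually_nhdsWithin_of_forall fun z hz => ?_)
  obtain ⟨y, hy, hyz⟩ := (csInf_lt_iff hbdd hne).1 hz
  exact hy.trans (monotone_cdf ν hyz.le)

theorem lt_quantile_iff {p : ℝ} (hp : p ∈ Ioo 0 1) (x : ℝ) :
    x < quantile ν p ↔ cdf ν x < p := by
  simpa only [not_le] using (quantile_le_iff ν hp x).not

theorem monotoneOn_quantile : MonotoneOn (quantile ν) (Ioo 0 1) := fun _ hp _ hq hpq =>
  (quantile_le_iff ν hp _).2 (hpq.trans ((quantile_le_iff ν hq _).1 le_rfl))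

theorem quantile_of_notMem_Ioc {p : ℝ} (hp : p ∉ Ioc 0 1) : quantile ν p = 0 := by
  rcases not_and_or.1 hp with hp | hp
  · have : {x | p ≤ cdf ν x} = univ :=
      eq_univ_of_forall fun x => (le_of_not_gt hp).trans (cdf_nonneg ν x)
    rw [quantile, this, Real.sInf_of_not_bddBelow not_bddBelow_univ]
  · have : {x | p ≤ cdf ν x} = ∅ :=
      eq_empty_of_forall_notMem fun x hx => hp (hx.trans (cdf_le_one ν x))
    rw [quantile, this, Real.sInf_empty]

theorem measurable_quantile : Measurable (quantile ν) := by
  refine measurable_of_restrict_of_restrict_compl (s := Ioo 0 1) measurableSet_Ioo ?_ ?_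
  · exact (show Monotone ((Ioo 0 1).domRestrict (quantile ν)) from
      fun p q hpq => monotoneOn_quantile ν p.2 q.2 hpq).measurable
  · have h : EqOn (quantile ν) (fun p => if p = 1 then quantile ν 1 else 0) (Ioo 0 1)ᶜ :=
      fun p hp => by
        by_cases h1 : p = 1
        · simp [h1]
        · simp [h1, quantile_of_notMem_Ioc ν fun h => hp ⟨h.1, h.2.lt_of_ne h1⟩]
    rw [domRestrict_eq_domRestrict_iff.2 h]
    exact (Measurable.ite (p := (· = 1)) (measurableSet_singleton 1) measurable_const
      measurable_const).comp measurable_subtype_coe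

end Quantile

theorem map_quantile_volume_restrict_Ioo (ν : Measure ℝ) [IsProbabilityMeasure ν] :
    (volume.restrict (Ioo (0 : ℝ) 1)).map (quantile ν) = ν := by
  refine Measure.ext_of_Iic _ _ fun x => ?_
  have hpre : quantile ν ⁻¹' Iic x ∩ Ioo 0 1 = Iic (cdf ν x) ∩ Ioo 0 1 := by
    ext p
    simp +contextual [quantile_le_iff ν _ x]
  rw [Measure.map_apply (measurable_quantile ν) measurableSet_Iic,
    Measure.restrict_apply' measurableSet_Ioo, hpre,
    measure_congr ((ae_eq_refl _).inter Ioo_ae_eq_Ioc), Iic_inter_Ioc_of_le (cdf_le_one ν x),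
    Real.volume_Ioc, sub_zero, ofReal_cdf]

theorem measure_Ioi_inter_Ioi {α : Type*} [LinearOrder α] [MeasurableSpace α] (μ : Measure α)
    (a b : α) : μ (Ioi a ∩ Ioi b) = min (μ (Ioi a)) (μ (Ioi b)) := by
  rcases le_total a b with h | h
  · rw [inter_eq_right.2 (Ioi_subset_Ioi h), min_eq_right (measure_mono (Ioi_subset_Ioi h))]
  · rw [inter_eq_left.2 (Ioi_subset_Ioi h), min_eq_left (measure_mono (Ioi_subset_Ioi h))]

theorem volume_restrict_Ioo_quantile_gt_inter (ν ν' : Measure ℝ) (s t : ℝ) :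
    volume.restrict (Ioo (0 : ℝ) 1) (quantile ν ⁻¹' Ioi s ∩ quantile ν' ⁻¹' Ioi t) =
      min (volume.restrict (Ioo (0 : ℝ) 1) (quantile ν ⁻¹' Ioi s))
        (volume.restrict (Ioo (0 : ℝ) 1) (quantile ν' ⁻¹' Ioi t)) := by
  have hIoi : ∀ (ν : Measure ℝ) (s : ℝ),
      quantile ν ⁻¹' Ioi s ∩ Ioo 0 1 = Ioi (cdf ν s) ∩ Ioo 0 1 := fun ν s => by
    ext p
    simp +contextual [lt_quantile_iff ν _ s]
  simp only [Measure.restrict_apply' measurableSet_Ioo]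
  rw [inter_inter_distrib_right, hIoi, hIoi, ← inter_inter_distrib_right]
  simp only [← Measure.restrict_apply' measurableSet_Ioo]
  exact measure_Ioi_inter_Ioi _ _ _

section Comonotone

variable {Ω : Type*} [MeasurableSpace Ω] {μ : Measure Ω} {U : Ω → ℝ}

theorem measurable_comono (hUm : Measurable U) (X : Ω → ℝ) : Measurable (comono μ U X) :=
  (measurable_quantile _).comp hUm

variable [IsProbabilityMeasure μ] (hUm : Measurable U)
  (hU : Measure.map U μ = volume.restrict (Ioo (0 : ℝ) 1))
include hUm hU

theorem identDistrib_comono {X : Ω → ℝ} (hXm : Measurable X) :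
    IdentDistrib (comono μ U X) X μ μ := by
  have := Measure.isProbabilityMeasure_map (μ := μ) hXm.aemeasurable
  refine ⟨(measurable_comono hUm X).aemeasurable, hXm.aemeasurable, ?_⟩
  change μ.map (quantile (μ.map X) ∘ U) = μ.map X
  rw [← Measure.map_map (measurable_quantile _) hUm, hU, map_quantile_volume_restrict_Ioo]

theorem measure_comono_gt_inter {X Y : Ω → ℝ} (hXm : Measurable X) (hYm : Measurable Y)
    (s t : ℝ) :
    μ (comono μ U X ⁻¹' Ioi s ∩ comono μ U Y ⁻¹' Ioi t) =
      min (μ (X ⁻¹' Ioi s)) (μ (Y ⁻¹' Ioi t)) := by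
  rw [← (identDistrib_comono hUm hU hXm).measure_mem_eq measurableSet_Ioi,
    ← (identDistrib_comono hUm hU hYm).measure_mem_eq measurableSet_Ioi]
  have hq : ∀ (ν : Measure ℝ) (s : ℝ), MeasurableSet (quantile ν ⁻¹' Ioi s) :=
    fun ν s => measurable_quantile ν measurableSet_Ioi
  have hpre : ∀ (Z : Ω → ℝ) (S : Set ℝ),
      comono μ U Z ⁻¹' S = U ⁻¹' (quantile (μ.map Z) ⁻¹' S) := fun _ _ => rfl
  rw [hpre, hpre, ← preimage_inter, ← Measure.map_apply hUm ((hq _ _).inter (hq _ _)),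
    ← Measure.map_apply hUm (hq _ _), ← Measure.map_apply hUm (hq _ _), hU]
  exact volume_restrict_Ioo_quantile_gt_inter _ _ s t

theorem measure_gt_inter_le_comono {X Y : Ω → ℝ} (hXm : Measurable X) (hYm : Measurable Y)
    (s t : ℝ) :
    μ (X ⁻¹' Ioi s ∩ Y ⁻¹' Ioi t) ≤ μ (comono μ U X ⁻¹' Ioi s ∩ comono μ U Y ⁻¹' Ioi t) := by
  rw [measure_comono_gt_inter hUm hU hXm hYm]
  exact le_min (measure_mono inter_subset_left) (measure_mono inter_subset_right)

end Comonotone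

section Layer

-- Signed layer-cake integrand: `x = ∫ s, layer s x` whatever the sign of `x`.
noncomputable def layer (s x : ℝ) : ℝ := (Ioi s).indicator 1 x - (Iio 0).indicator 1 s

theorem layer_eq_indicator_sub_indicator (s x : ℝ) :
    layer s x = (Ico 0 x).indicator 1 s - (Ico x 0).indicator 1 s := by
  by_cases h1 : s < x <;> by_cases h2 : s < 0 <;> by_cases h3 : 0 ≤ s <;> by_cases h4 : x ≤ s <;>
    simp [layer, *] <;> linarith

theorem abs_layer (s x : ℝ) :
    |layer s x| = (Ico 0 x).indicator 1 s + (Ico x 0).indicator 1 s := by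
  by_cases h1 : s < x <;> by_cases h2 : s < 0 <;> by_cases h3 : 0 ≤ s <;> by_cases h4 : x ≤ s <;>
    simp [layer, *] <;> linarith

theorem measurable_layer : Measurable (Function.uncurry layer) :=
  (measurable_const.indicator (measurableSet_lt measurable_fst measurable_snd)).sub
    (measurable_const.indicator (measurableSet_lt measurable_fst measurable_const))

theorem integrable_indicator_one_Ico (a b : ℝ) : Integrable ((Ico a b).indicator (1 : ℝ → ℝ)) :=
  (integrableOn_const measure_Ico_lt_top.ne).integrable_indicator measurableSet_Ico

theorem integrable_layer (x : ℝ) : Integrable (fun s => layer s x) := by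
  simp only [layer_eq_indicator_sub_indicator]
  exact (integrable_indicator_one_Ico 0 x).sub (integrable_indicator_one_Ico x 0)

theorem integral_layer (x : ℝ) : ∫ s, layer s x = x := by
  simp only [layer_eq_indicator_sub_indicator]
  rw [integral_sub (integrable_indicator_one_Ico 0 x) (integrable_indicator_one_Ico x 0),
    integral_indicator_one measurableSet_Ico, integral_indicator_one measurableSet_Ico,
    Real.volume_real_Ico, Real.volume_real_Ico, sub_zero, zero_sub]
  exact max_zero_sub_max_neg_zero_eq_self x

theorem integral_abs_layer (x : ℝ) : ∫ s, |layer s x| = |x| := by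
  simp only [abs_layer]
  rw [integral_add (integrable_indicator_one_Ico 0 x) (integrable_indicator_one_Ico x 0),
    integral_indicator_one measurableSet_Ico, integral_indicator_one measurableSet_Ico,
    Real.volume_real_Ico, Real.volume_real_Ico, sub_zero, zero_sub]
  exact max_zero_add_max_neg_zero_eq_abs_self x

end Layer

section Hoeffding

variable {Ω : Type*} [MeasurableSpace Ω] {μ : Measure Ω} {X Y : Ω → ℝ}

theorem integrable_layer_mul_layer [SFinite μ] (hXm : Measurable X) (hYm : Measurable Y)
    (hXY : Integrable (fun ω => X ω * Y ω) μ) :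
    Integrable (fun q : Ω × ℝ × ℝ => layer q.2.1 (X q.1) * layer q.2.2 (Y q.1))
      (μ.prod (volume.prod volume)) := by
  have hm : Measurable fun q : Ω × ℝ × ℝ => layer q.2.1 (X q.1) * layer q.2.2 (Y q.1) :=
    (measurable_layer.comp (measurable_snd.fst.prodMk (hXm.comp measurable_fst))).mul
      (measurable_layer.comp (measurable_snd.snd.prodMk (hYm.comp measurable_fst)))
  refine (integrable_prod_iff hm.aestronglyMeasurable).2
    ⟨ae_of_all _ fun ω => (integrable_layer (X ω)).mul_prod (integrable_layer (Y ω)), ?_⟩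
  refine hXY.abs.congr (ae_of_all _ fun ω => ?_)
  simp only [Real.norm_eq_abs, abs_mul]
  rw [integral_prod_mul (fun s => |layer s (X ω)|) (fun t => |layer t (Y ω)|),
    integral_abs_layer, integral_abs_layer]

theorem integral_mul_eq_integral_integral_layer [SFinite μ] (hXm : Measurable X)
    (hYm : Measurable Y) (hXY : Integrable (fun ω => X ω * Y ω) μ) :
    ∫ ω, X ω * Y ω ∂μ =
      ∫ st : ℝ × ℝ, ∫ ω, layer st.1 (X ω) * layer st.2 (Y ω) ∂μ ∂(volume.prod volume) := by
  rw [← integral_integral_swap (f := fun ω (st : ℝ × ℝ) => layer st.1 (X ω) * layer st.2 (Y ω))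
    (integrable_layer_mul_layer hXm hYm hXY)]
  congr with ω
  rw [integral_prod_mul (fun s => layer s (X ω)) (fun t => layer t (Y ω)), integral_layer,
    integral_layer]

variable [IsProbabilityMeasure μ]

theorem integral_indicator_sub_mul_indicator_sub {A B : Set Ω} (hA : MeasurableSet A)
    (hB : MeasurableSet B) (a b : ℝ) :
    ∫ ω, (A.indicator 1 ω - a) * (B.indicator 1 ω - b) ∂μ =
      μ.real (A ∩ B) - b * μ.real A - a * μ.real B + a * b := by
  have hpt : ∀ ω, (A.indicator 1 ω - a) * (B.indicator 1 ω - b) =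
      (A ∩ B).indicator 1 ω - b * A.indicator 1 ω - a * B.indicator 1 ω + a * b := fun ω => by
    by_cases hωA : ω ∈ A <;> by_cases hωB : ω ∈ B <;> simp [hωA, hωB] <;> ring
  have hAi : Integrable (A.indicator (1 : Ω → ℝ)) μ := (integrable_const 1).indicator hA
  have hBi : Integrable (B.indicator (1 : Ω → ℝ)) μ := (integrable_const 1).indicator hB
  have hABi : Integrable ((A ∩ B).indicator (1 : Ω → ℝ)) μ :=
    (integrable_const 1).indicator (hA.inter hB)
  simp only [hpt]
  rw [integral_add (by fun_prop) (by fun_prop), integral_sub (by fun_prop) (by fun_prop),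
    integral_sub hABi (by fun_prop), integral_const_mul, integral_const_mul,
    integral_indicator_one (hA.inter hB), integral_indicator_one hA, integral_indicator_one hB,
    integral_const, probReal_univ, one_smul]

theorem integral_layer_mul_layer (hXm : Measurable X) (hYm : Measurable Y) (s t : ℝ) :
    ∫ ω, layer s (X ω) * layer t (Y ω) ∂μ =
      μ.real (X ⁻¹' Ioi s ∩ Y ⁻¹' Ioi t) - (Iio 0).indicator 1 t * μ.real (X ⁻¹' Ioi s)
        - (Iio 0).indicator 1 s * μ.real (Y ⁻¹' Ioi t)
        + (Iio 0).indicator 1 s * (Iio 0).indicator 1 t :=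
  integral_indicator_sub_mul_indicator_sub (hXm measurableSet_Ioi) (hYm measurableSet_Ioi) _ _

end Hoeffding

section Comparison

variable {Ω : Type*} [MeasurableSpace Ω] {μ : Measure Ω} [IsProbabilityMeasure μ] {U : Ω → ℝ}
  (hUm : Measurable U) (hU : Measure.map U μ = volume.restrict (Ioo (0 : ℝ) 1))
  {X Y : Ω → ℝ} (hXm : Measurable X) (hYm : Measurable Y) (hX : MemLp X 2 μ) (hY : MemLp Y 2 μ)
include hUm hU hXm hYm hX hY

theorem integral_mul_le_integral_comono_mul_comono :
    ∫ ω, X ω * Y ω ∂μ ≤ ∫ ω, comono μ U X ω * comono μ U Y ω ∂μ := by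
  have hcX := identDistrib_comono hUm hU hXm
  have hcY := identDistrib_comono hUm hU hYm
  have hcXm := measurable_comono hUm (μ := μ) X
  have hcYm := measurable_comono hUm (μ := μ) Y
  have hXY := hX.integrable_mul hY
  have hcXY := (hcX.memLp_iff.2 hX).integrable_mul (hcY.memLp_iff.2 hY)
  rw [integral_mul_eq_integral_integral_layer hXm hYm hXY,
    integral_mul_eq_integral_integral_layer hcXm hcYm hcXY]
  refine integral_mono (integrable_layer_mul_layer hXm hYm hXY).integral_prod_right
    (integrable_layer_mul_layer hcXm hcYm hcXY).integral_prod_right fun st => ?_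
  simp only [integral_layer_mul_layer hXm hYm, integral_layer_mul_layer hcXm hcYm, measureReal_def,
    hcX.measure_mem_eq measurableSet_Ioi, hcY.measure_mem_eq measurableSet_Ioi]
  have hjoint := ENNReal.toReal_mono (measure_ne_top _ _)
    (measure_gt_inter_le_comono hUm hU hXm hYm st.1 st.2)
  linarith

theorem covariance_le_covariance_comono :
    cov[X, Y; μ] ≤ cov[comono μ U X, comono μ U Y; μ] := by
  have hcX := identDistrib_comono hUm hU hXm
  have hcY := identDistrib_comono hUm hU hYm
  rw [covariance_eq_sub hX hY, covariance_eq_sub (hcX.memLp_iff.2 hX) (hcY.memLp_iff.2 hY),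
    hcX.integral_eq, hcY.integral_eq]
  exact sub_le_sub_right (integral_mul_le_integral_comono_mul_comono hUm hU hXm hYm hX hY) _

end Comparison

theorem cov'_eq_covariance {Ω : Type*} [MeasurableSpace Ω] {μ : Measure Ω}
    [IsProbabilityMeasure μ] {X Y : Ω → ℝ} (hX : MemLp X 2 μ) (hY : MemLp Y 2 μ) :
    cov' μ X Y = cov[X, Y; μ] :=
  (covariance_eq_sub hX hY).symm

theorem var'_weighted_sum {Ω ι : Type*} [MeasurableSpace Ω] {μ : Measure Ω}
    [IsProbabilityMeasure μ] [Fintype ι] {Z : ι → Ω → ℝ} (hZ : ∀ i, MemLp (Z i) 2 μ)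
    (w : ι → ℝ) :
    var' μ (fun ω => ∑ i, w i * Z i ω) = ∑ i, ∑ j, w i * w j * cov[Z i, Z j; μ] := by
  have hwZ : ∀ i, MemLp (fun ω => w i * Z i ω) 2 μ := fun i => (hZ i).const_mul (w i)
  have hsum := memLp_finsetSum Finset.univ fun i _ => hwZ i
  rw [var', cov'_eq_covariance hsum hsum, covariance_fun_sum_fun_sum hwZ hwZ]
  simp only [covariance_const_mul_left, covariance_const_mul_right]
  exact Finset.sum_congr rfl fun i _ => Finset.sum_congr rfl fun j _ => by ring

theorem stmt_14 {Ω : Type*} [MeasurableSpace Ω] (μ : Measure Ω) [IsProbabilityMeasure μ]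
    (U : Ω → ℝ) (hUm : Measurable U)
    (hU : Measure.map U μ = volume.restrict (Set.Ioo (0 : ℝ) 1))
    {d : ℕ} (X : Fin d → Ω → ℝ) (hXm : ∀ i, Measurable (X i))
    (hX : ∀ i, MemLp (X i) 2 μ) (w : Fin d → ℝ) (hw : ∀ i, 0 ≤ w i) :
    var' μ (fun ω => ∑ i, w i * X i ω) ≤
      var' μ (fun ω => ∑ i, w i * comono μ U (X i) ω) := by
  have hcX : ∀ i, MemLp (comono μ U (X i)) 2 μ :=
    fun i => (identDistrib_comono hUm hU (hXm i)).memLp_iff.2 (hX i)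
  rw [var'_weighted_sum hX, var'_weighted_sum hcX]
  gcongr with i _ j _
  · exact mul_nonneg (hw i) (hw j)
  · exact covariance_le_covariance_comono hUm hU (hXm i) (hXm j) (hX i) (hX j)
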